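/- Let E be a finite set, r a positive integer, and F a hyperfield. A function φ : E^r → F is a Grassmann–Plücker function of rank r with coefficients in the hyperfield F if and only if the function x ↦ {φ(x)}, valued in 𝓕(F)^× ∪ {0}, is a Grassmann–Plücker function of rank r with coefficients in the fuzzy ring 𝓕(F). -/

import Mathlib

open Set

/-! ### Set-level operations induced by a hyperoperation -/

/-- The sum of two subsets with respect to a hyperaddition. -/
def sAddOf {R : Type*} (add : R → R → Set R) (X Y : Set R) : Set R :=
  ⋃ x ∈ X, ⋃ y ∈ Y, add x y

/-- The hypersum of a list of elements (padded with a final `zero`). -/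
def hypersum {R : Type*} (add : R → R → Set R) (zero : R) (l : List R) : Set R :=
  l.foldr (fun a X => sAddOf add {a} X) {zero}

/-- The collection of all finite (nonempty) hypersums of elements. -/
def sumSet {R : Type*} (add : R → R → Set R) : Set (Set R) :=
  {A | ∃ (a : R) (l : List R), A = l.foldr (fun x X => sAddOf add {x} X) ({a} : Set R)}

/-- The nonempty subsets of a type. -/
abbrev NSet (R : Type*) := {A : Set R // A.Nonempty}

/-- Image of a nonempty subset under a map. -/
def NSet.map {R S : Type*} (f : R → S) (A : NSet R) : NSet S := ⟨f '' A.1, A.2.image f⟩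

/-- Elementwise product of nonempty subsets. -/
def nsMul {R : Type*} (mul : R → R → R) (A B : NSet R) : NSet R :=
  ⟨Set.image2 mul A.1 B.1, A.2.image2 B.2⟩

/-! ### Hyperrings and hyperfields -/

/-- The data `(add, mul, zero, one)` forms a hyperring: `(R, add)` is a canonical
hypergroup, `(R, mul)` is a commutative unital monoid, and multiplication
distributes over hyperaddition with `zero` absorbing. -/
structure IsHyperring {R : Type*} (add : R → R → Set R) (mul : R → R → R)
    (zero one : R) : Prop where
  add_nonempty : ∀ a b, (add a b).Nonempty
  add_comm : ∀ a b, add a b = add b a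
  add_zero : ∀ a, add a zero = {a}
  exists_neg : ∀ a, ∃! b, zero ∈ add a b
  add_assoc : ∀ a b c, sAddOf add (add a b) {c} = sAddOf add {a} (add b c)
  reversible : ∀ a b b' c, zero ∈ add b b' → (a ∈ add b c ↔ c ∈ add a b')
  mul_comm : ∀ a b, mul a b = mul b a
  mul_assoc : ∀ a b c, mul (mul a b) c = mul a (mul b c)
  mul_one : ∀ a, mul a one = a
  mul_zero : ∀ a, mul a zero = zero
  distrib : ∀ a b c, mul a '' add b c = add (mul a b) (mul a c)

/-- The data forms a hyperfield: a hyperring in which every nonzero element is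
a multiplicative unit. -/
structure IsHyperfield {R : Type*} (add : R → R → Set R) (mul : R → R → R)
    (zero one : R) extends IsHyperring add mul zero one : Prop where
  one_ne_zero : one ≠ zero
  inv : ∀ a, a ≠ zero → ∃ b, mul a b = one

/-- A (bundled) hyperring structure on `R`. -/
structure Hyperring (R : Type*) where
  add : R → R → Set R
  mul : R → R → R
  zero : R
  one : R
  isHyperring : IsHyperring add mul zero one

/-- The hyperadditive inverse. -/
noncomputable def Hyperring.neg {R : Type*} (H : Hyperring R) (a : R) : R :=
  (H.isHyperring.exists_neg a).exists.choose

/-- A unit of a hyperring. -/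
def Hyperring.IsUnit {R : Type*} (H : Hyperring R) (a : R) : Prop :=
  ∃ b, H.mul a b = H.one

/-- A (bundled) hyperfield structure on `R`. -/
structure Hyperfield (R : Type*) extends Hyperring R where
  one_ne_zero : one ≠ zero
  inv : ∀ a, a ≠ zero → ∃ b, mul a b = one

/-- A homomorphism of hyperrings (with respect to unbundled data):
`f 0 = 0`, `f 1 = 1`, `f(a+b) ⊆ f a + f b` and `f(a×b) = f a × f b`. -/
structure IsHyperringHom {R S : Type*}
    (addR : R → R → Set R) (mulR : R → R → R) (zeroR oneR : R)
    (addS : S → S → Set S) (mulS : S → S → S) (zeroS oneS : S)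
    (f : R → S) : Prop where
  map_zero : f zeroR = zeroS
  map_one : f oneR = oneS
  map_add : ∀ a b, f '' addR a b ⊆ addS (f a) (f b)
  map_mul : ∀ a b, f (mulR a b) = mulS (f a) (f b)

/-- A strict homomorphism of hyperrings: as above, but `f(a+b) = f a + f b`. -/
structure IsStrictHyperringHom {R S : Type*}
    (addR : R → R → Set R) (mulR : R → R → R) (zeroR oneR : R)
    (addS : S → S → Set S) (mulS : S → S → S) (zeroS oneS : S)
    (f : R → S) : Prop where
  map_zero : f zeroR = zeroS
  map_one : f oneR = oneS
  map_add : ∀ a b, f '' addR a b = addS (f a) (f b)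
  map_mul : ∀ a b, f (mulR a b) = mulS (f a) (f b)

/-! ### Fuzzy rings -/

/-- The data of a fuzzy ring: two binary operations, neutral elements,
a distinguished element `eps` and a set `null` of null elements. -/
structure FuzzyData (K : Type*) where
  add : K → K → K
  mul : K → K → K
  zero : K
  one : K
  eps : K
  null : Set K

namespace FuzzyData

/-- Multiplicative units. -/
def IsUnit {K : Type*} (D : FuzzyData K) (a : K) : Prop := ∃ b, D.mul a b = D.one

/-- Sum of a list of elements. -/
def sum {K : Type*} (D : FuzzyData K) (l : List K) : K := l.foldr D.add D.zero

/-- A fuzzy ring is field-like if for each pair of units `a, b` there exists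
`c ∈ K^× ∪ {0}` with `a + b + c` null. -/
def FieldLike {K : Type*} (D : FuzzyData K) : Prop :=
  ∀ a b, D.IsUnit a → D.IsUnit b →
    ∃ c, (D.IsUnit c ∨ c = D.zero) ∧ D.add (D.add a b) c ∈ D.null

end FuzzyData

/-- Dress's fuzzy ring axioms (FR0)–(FR7). -/
structure IsFuzzyRing {K : Type*} (D : FuzzyData K) : Prop where
  add_comm : ∀ a b, D.add a b = D.add b a
  add_assoc : ∀ a b c, D.add (D.add a b) c = D.add a (D.add b c)
  add_zero : ∀ a, D.add a D.zero = a
  mul_comm : ∀ a b, D.mul a b = D.mul b a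
  mul_assoc : ∀ a b c, D.mul (D.mul a b) c = D.mul a (D.mul b c)
  mul_one : ∀ a, D.mul a D.one = a
  zero_mul : ∀ a, D.mul D.zero a = D.zero
  unit_distrib : ∀ a b c, D.IsUnit a → D.mul a (D.add b c) = D.add (D.mul a b) (D.mul a c)
  eps_sq : D.mul D.eps D.eps = D.one
  null_add : ∀ a ∈ D.null, ∀ b ∈ D.null, D.add a b ∈ D.null
  mul_null : ∀ (a : K), ∀ b ∈ D.null, D.mul a b ∈ D.null
  zero_mem_null : D.zero ∈ D.null
  one_not_mem_null : D.one ∉ D.null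
  fr5 : ∀ a, D.IsUnit a → (D.add D.one a ∈ D.null ↔ a = D.eps)
  fr6 : ∀ a b c d, D.add a b ∈ D.null → D.add c d ∈ D.null →
    D.add (D.mul a c) (D.mul D.eps (D.mul b d)) ∈ D.null
  fr7 : ∀ a b c d, D.add a (D.mul b (D.add c d)) ∈ D.null →
    D.add (D.add a (D.mul b c)) (D.mul b d) ∈ D.null

/-- A weak morphism of fuzzy rings: a map inducing a group homomorphism on units
which preserves null sums of units. -/
structure IsWeakMorphism {K L : Type*} (D : FuzzyData K) (E : FuzzyData L)
    (f : K → L) : Prop where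
  map_unit : ∀ a, D.IsUnit a → E.IsUnit (f a)
  map_one : f D.one = E.one
  map_mul : ∀ a b, D.IsUnit a → D.IsUnit b → f (D.mul a b) = E.mul (f a) (f b)
  map_null : ∀ l : List K, (∀ a ∈ l, D.IsUnit a) →
    D.sum l ∈ D.null → E.sum (l.map f) ∈ E.null

/-- A strong morphism of fuzzy rings. -/
structure IsStrongMorphism {K L : Type*} (D : FuzzyData K) (E : FuzzyData L)
    (f : K → L) : Prop where
  map_one : f D.one = E.one
  map_zero : f D.zero = E.zero
  map_mul : ∀ a b, D.IsUnit a → f (D.mul a b) = E.mul (f a) (f b)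
  map_null : ∀ l : List (K × K),
    D.sum (l.map fun p => D.mul p.1 p.2) ∈ D.null →
    E.sum (l.map fun p => E.mul (f p.1) (f p.2)) ∈ E.null

/-! ### The functor 𝓕 from hyperrings to fuzzy rings -/

/-- The fuzzy-ring data `𝓕(R)` associated to a hyperring `R`: the nonempty
subsets of `R` with subset addition and multiplication, `ε = {-1}`, and null
elements the subsets containing `0`. -/
noncomputable def Hyperring.Fuzzy {R : Type*} (H : Hyperring R) : FuzzyData (NSet R) where
  add A B := ⟨sAddOf H.add A.1 B.1, by
    obtain ⟨a, ha⟩ := A.2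
    obtain ⟨b, hb⟩ := B.2
    obtain ⟨c, hc⟩ := H.isHyperring.add_nonempty a b
    exact ⟨c, Set.mem_biUnion ha (Set.mem_biUnion hb hc)⟩⟩
  mul A B := nsMul H.mul A B
  zero := ⟨{H.zero}, Set.singleton_nonempty _⟩
  one := ⟨{H.one}, Set.singleton_nonempty _⟩
  eps := ⟨{H.neg H.one}, Set.singleton_nonempty _⟩
  null := {A | H.zero ∈ A.1}

/-! ### The functor 𝒢 from field-like fuzzy rings to hyperfields -/

/-- The carrier `K^× ∪ {0}` of `𝒢(K)`. -/
def GCarrier {K : Type*} (D : FuzzyData K) := {a : K // D.IsUnit a ∨ a = D.zero}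

/-- The hyperaddition of `𝒢(K)`: `a ⊕ b = {c : a + b + ε c ∈ K₀}`. -/
def Gadd {K : Type*} (D : FuzzyData K) (a b : GCarrier D) : Set (GCarrier D) :=
  {c | D.add (D.add a.1 b.1) (D.mul D.eps c.1) ∈ D.null}

/-- The zero element of `𝒢(K)`. -/
def Gzero {K : Type*} (D : FuzzyData K) : GCarrier D := ⟨D.zero, Or.inr rfl⟩

/-- The one element of `𝒢(K)`. -/
def Gone {K : Type*} {D : FuzzyData K} (h : IsFuzzyRing D) : GCarrier D :=
  ⟨D.one, Or.inl ⟨D.one, h.mul_one D.one⟩⟩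

/-- The multiplication of `𝒢(K)`. -/
def Gmul {K : Type*} {D : FuzzyData K} (h : IsFuzzyRing D) (a b : GCarrier D) :
    GCarrier D :=
  ⟨D.mul a.1 b.1, by
    rcases b.2 with hb | hb
    · rcases a.2 with ha | ha
      · left
        obtain ⟨a', ha'⟩ := ha
        obtain ⟨b', hb'⟩ := hb
        refine ⟨D.mul a' b', ?_⟩
        rw [h.mul_assoc a.1 b.1 (D.mul a' b'), ← h.mul_assoc b.1 a' b',
          h.mul_comm b.1 a', h.mul_assoc a' b.1 b', hb', h.mul_one, ha']
      · right; rw [ha, h.zero_mul]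
    · right; rw [hb, h.mul_comm, h.zero_mul]⟩

open Classical in
/-- The extension of a weak morphism to `𝒢(K) → 𝒢(L)`, sending `0` to `0`. -/
noncomputable def Gmap {K L : Type*} {D : FuzzyData K} {E : FuzzyData L} {f : K → L}
    (hf : IsWeakMorphism D E f) (a : GCarrier D) : GCarrier E :=
  if h : a.1 = D.zero then Gzero E
  else ⟨f a.1, Or.inl (hf.map_unit a.1 (a.2.resolve_right h))⟩

/-- The canonical map `F → 𝒢(𝓕(F))`, `x ↦ {x}`, for a hyperfield `F`. -/
noncomputable def toG {R : Type*} (F : Hyperfield R) (x : R) :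
    GCarrier F.toHyperring.Fuzzy :=
  ⟨⟨{x}, Set.singleton_nonempty x⟩, by
    by_cases hx : x = F.toHyperring.zero
    · exact Or.inr (by subst hx; rfl)
    · obtain ⟨y, hy⟩ := F.inv x hx
      exact Or.inl ⟨⟨{y}, Set.singleton_nonempty y⟩, by
        apply Subtype.ext
        show Set.image2 F.toHyperring.mul {x} {y} = {F.toHyperring.one}
        rw [Set.image2_singleton, hy]⟩⟩

/-! ### Doubly-distributive hyperfields -/

/-- A hyperfield is doubly-distributive if `(a+b)(c+d) = ac + ad + bc + bd`. -/
def Hyperfield.DoublyDistributive {R : Type*} (F : Hyperfield R) : Prop :=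
  ∀ a b c d : R,
    Set.image2 F.mul (F.add a b) (F.add c d) =
      sAddOf F.add (sAddOf F.add (F.add (F.mul a c) (F.mul a d)) {F.mul b c})
        {F.mul b d}

/-! ### The tropical hyperfield of a totally ordered abelian group, and K_Γ -/

/-- The hyperaddition of the hyperfield `H_Γ` on `Γ ∪ {0}`. -/
def tropAdd (Γ : Type*) [CommGroup Γ] [LinearOrder Γ] [IsOrderedMonoid Γ] (x y : WithZero Γ) :
    Set (WithZero Γ) :=
  if x = y then Set.Iic x else {max x y}

/-- The underlying set of the fuzzy ring `K_Γ`: all singletons and all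
intervals `[0, a]` in `Γ ∪ {0}`. -/
def KgSet (Γ : Type*) [CommGroup Γ] [LinearOrder Γ] [IsOrderedMonoid Γ] : Set (Set (WithZero Γ)) :=
  {A | (∃ a : WithZero Γ, A = {a}) ∨ ∃ a : WithZero Γ, A = Set.Iic a}

open Classical in
/-- The casewise addition of `K_Γ`. -/
noncomputable def KgAdd (Γ : Type*) [CommGroup Γ] [LinearOrder Γ] [IsOrderedMonoid Γ]
    (A B : Set (WithZero Γ)) : Set (WithZero Γ) :=
  if h : ∃ a b : WithZero Γ, A = {a} ∧ B = {b} then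
    if h.choose = h.choose_spec.choose then Set.Iic h.choose
    else {max h.choose h.choose_spec.choose}
  else if h : ∃ a b : WithZero Γ, A = {a} ∧ B = Set.Iic b then
    if h.choose ≤ h.choose_spec.choose then Set.Iic h.choose_spec.choose
    else {h.choose}
  else if h : ∃ a b : WithZero Γ, A = Set.Iic a ∧ B = {b} then
    if h.choose_spec.choose ≤ h.choose then Set.Iic h.choose
    else {h.choose_spec.choose}
  else if h : ∃ a b : WithZero Γ, A = Set.Iic a ∧ B = Set.Iic b then
    Set.Iic (max h.choose h.choose_spec.choose)
  else ∅

/-- The carrier of `K_Γ` as a subtype. -/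
def Kg (Γ : Type*) [CommGroup Γ] [LinearOrder Γ] [IsOrderedMonoid Γ] := {A : Set (WithZero Γ) // A ∈ KgSet Γ}

/-- The inclusion `K_Γ → 𝓕(H_Γ)`. -/
noncomputable def KgToF (Γ : Type*) [CommGroup Γ] [LinearOrder Γ] [IsOrderedMonoid Γ] (A : Kg Γ) : NSet (WithZero Γ) :=
  ⟨A.1, by
    rcases A.2 with ⟨a, h⟩ | ⟨a, h⟩
    · rw [h]; exact Set.singleton_nonempty a
    · rw [h]; exact ⟨a, Set.mem_Iic.2 le_rfl⟩⟩

/-! ### Grassmann–Plücker functions -/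

/-- A Grassmann–Plücker function of rank `r+1` on `E` with coefficients in a
hyperfield `F`. -/
noncomputable def IsGPHyper {R E : Type*} [Fintype E] (F : Hyperfield R) (r : ℕ)
    (φ : (Fin (r + 1) → E) → R) : Prop :=
  (∃ x, φ x ≠ F.zero) ∧
  (∀ x : Fin (r + 1) → E, ∀ i j : Fin (r + 1), i ≠ j → x i = x j → φ x = F.zero) ∧
  (∀ (x : Fin (r + 1) → E) (σ : Equiv.Perm (Fin (r + 1))), Equiv.Perm.sign σ = -1 →
    φ (x ∘ σ) = F.toHyperring.neg (φ x)) ∧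
  (∀ (x : Fin (r + 2) → E) (y : Fin r → E),
    F.zero ∈ hypersum F.add F.zero
      ((List.finRange (r + 2)).map fun (k : Fin (r + 2)) =>
        if Even (k : ℕ)
        then F.toHyperring.neg (F.mul (φ (x ∘ k.succAbove)) (φ (Fin.cons (x k) y)))
        else F.mul (φ (x ∘ k.succAbove)) (φ (Fin.cons (x k) y))))

/-- A Grassmann–Plücker function of rank `r+1` on `E` with coefficients in a
fuzzy ring (given by its data `D`). -/
def IsGPFuzzy {K E : Type*} [Fintype E] (D : FuzzyData K) (r : ℕ)
    (φ : (Fin (r + 1) → E) → K) : Prop :=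
  (∀ x, D.IsUnit (φ x) ∨ φ x = D.zero) ∧
  (∃ x, φ x ≠ D.zero) ∧
  (∀ x : Fin (r + 1) → E, ∀ i j : Fin (r + 1), i ≠ j → x i = x j → φ x = D.zero) ∧
  (∀ (x : Fin (r + 1) → E) (σ : Equiv.Perm (Fin (r + 1))), Equiv.Perm.sign σ = -1 →
    φ (x ∘ σ) = D.mul D.eps (φ x)) ∧
  (∀ (x : Fin (r + 2) → E) (y : Fin r → E),
    D.sum ((List.finRange (r + 2)).map fun (k : Fin (r + 2)) =>
      if Even (k : ℕ)
      then D.mul D.eps (D.mul (φ (x ∘ k.succAbove)) (φ (Fin.cons (x k) y)))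
      else D.mul (φ (x ∘ k.succAbove)) (φ (Fin.cons (x k) y))) ∈ D.null)

/-
The singleton map `a ↦ {a}` identifies `F` with `𝓕(F)^× ∪ {0}` (every nonzero element of `F`
is invertible): it is injective, turns products into products, sends `-a` to `ε × {a}` (since
`-a = a × (-1)` by distributivity and uniqueness of negatives), and turns a hypersum into the
fuzzy sum of the singletons. So each Grassmann–Plücker axiom over `F` translates into the
corresponding axiom over `𝓕(F)`.
-/

namespace NSet

def single {R : Type*} (a : R) : NSet R := ⟨{a}, Set.singleton_nonempty a⟩

lemma single_injective {R : Type*} : Function.Injective (single (R := R)) :=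
  fun _ _ h => Set.singleton_eq_singleton_iff.mp (congrArg Subtype.val h)

end NSet

open NSet

namespace Hyperring

variable {R : Type*} (H : Hyperring R)

lemma neg_eq_mul_neg_one (a : R) : H.neg a = H.mul a (H.neg H.one) := by
  have hone : H.zero ∈ H.add H.one (H.neg H.one) :=
    (H.isHyperring.exists_neg H.one).exists.choose_spec
  have ha : H.zero ∈ H.add a (H.neg a) := (H.isHyperring.exists_neg a).exists.choose_spec
  have hmul : H.mul a H.zero ∈ H.mul a '' H.add H.one (H.neg H.one) := mem_image_of_mem _ hone
  rw [H.isHyperring.distrib, H.isHyperring.mul_zero, H.isHyperring.mul_one] at hmul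
  exact (H.isHyperring.exists_neg a).unique ha hmul

lemma fuzzy_mul_single (a b : R) : H.Fuzzy.mul (single a) (single b) = single (H.mul a b) :=
  Subtype.ext image2_singleton

lemma fuzzy_eps_mul_single (a : R) : H.Fuzzy.mul H.Fuzzy.eps (single a) = single (H.neg a) := by
  change H.Fuzzy.mul (single (H.neg H.one)) (single a) = _
  rw [fuzzy_mul_single, H.isHyperring.mul_comm, ← neg_eq_mul_neg_one]

lemma fuzzy_sum_map_single (l : List R) :
    (H.Fuzzy.sum (l.map single)).1 = hypersum H.add H.zero l := by
  induction l with
  | nil => rfl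
  | cons a l ih =>
    change sAddOf H.add {a} (H.Fuzzy.sum (l.map single)).1 = _
    rw [ih]
    rfl

lemma fuzzy_sum_signed_mem_null_iff {ι : Type*} (l : List ι) (P : ι → Prop) [DecidablePred P]
    (a b : ι → R) :
    H.Fuzzy.sum (l.map fun k =>
        if P k then H.Fuzzy.mul H.Fuzzy.eps (H.Fuzzy.mul (single (a k)) (single (b k)))
        else H.Fuzzy.mul (single (a k)) (single (b k))) ∈ H.Fuzzy.null ↔
      H.zero ∈ hypersum H.add H.zero (l.map fun k =>
        if P k then H.neg (H.mul (a k) (b k)) else H.mul (a k) (b k)) := by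
  have hterms : (l.map fun k =>
      if P k then H.Fuzzy.mul H.Fuzzy.eps (H.Fuzzy.mul (single (a k)) (single (b k)))
      else H.Fuzzy.mul (single (a k)) (single (b k))) =
        (l.map fun k => if P k then H.neg (H.mul (a k) (b k)) else H.mul (a k) (b k)).map single := by
    rw [List.map_map]
    refine List.map_congr_left fun k _ => ?_
    rw [Function.comp_apply]
    split_ifs <;> simp only [fuzzy_mul_single, fuzzy_eps_mul_single]
  change H.zero ∈ (H.Fuzzy.sum _).1 ↔ _
  rw [hterms, fuzzy_sum_map_single]

end Hyperring

lemma Hyperfield.fuzzy_isUnit_single_or_eq_zero {R : Type*} (F : Hyperfield R) (a : R) :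
    F.Fuzzy.IsUnit (single a) ∨ single a = F.Fuzzy.zero := by
  by_cases ha : a = F.zero
  · exact Or.inr (congrArg single ha)
  · obtain ⟨b, hb⟩ := F.inv a ha
    exact Or.inl ⟨single b, (F.fuzzy_mul_single a b).trans (congrArg single hb)⟩

/-- Let `E` be a finite set, `r + 1` a positive rank, and `F` a
hyperfield. A function `φ : E^(r+1) → F` is a Grassmann–Plücker function with
coefficients in the hyperfield `F` iff `x ↦ {φ(x)}`, valued in `𝓕(F)^× ∪ {0}`, is a
Grassmann–Plücker function with coefficients in the fuzzy ring `𝓕(F)`. -/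
theorem GP_hyper_iff_GP_fuzzy {R E : Type*} [Fintype E] (F : Hyperfield R) (r : ℕ)
    (φ : (Fin (r + 1) → E) → R) :
    IsGPHyper F r φ ↔
      IsGPFuzzy F.toHyperring.Fuzzy r
        (fun x => (⟨{φ x}, Set.singleton_nonempty (φ x)⟩ : NSet R)) := by
  have hrel := fun (x : Fin (r + 2) → E) (y : Fin r → E) =>
    F.fuzzy_sum_signed_mem_null_iff (List.finRange (r + 2)) (fun k => Even (k : ℕ))
        (fun k => φ (x ∘ k.succAbove)) (fun k => φ (Fin.cons (x k) y))
  have heps : ∀ a b : R, single a = F.Fuzzy.mul F.Fuzzy.eps (single b) ↔ a = F.neg b :=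
    fun a b => by rw [F.fuzzy_eps_mul_single, single_injective.eq_iff]
  constructor
  · rintro ⟨⟨x₀, hx₀⟩, halt, hneg, hgp⟩
    refine ⟨fun x => F.fuzzy_isUnit_single_or_eq_zero (φ x), ⟨x₀, ?_⟩, ?_, ?_, ?_⟩
    · exact single_injective.ne hx₀
    · exact fun x i j hij hx => congrArg single (halt x i j hij hx)
    · exact fun x σ hσ => (heps _ _).mpr (hneg x σ hσ)
    · exact fun x y => (hrel x y).mpr (hgp x y)
  · rintro ⟨-, ⟨x₀, hx₀⟩, halt, hneg, hgp⟩
    refine ⟨⟨x₀, fun h => hx₀ (congrArg single h)⟩, ?_, ?_, ?_⟩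
    · exact fun x i j hij hx => single_injective (halt x i j hij hx)
    · exact fun x σ hσ => (heps _ _).mp (hneg x σ hσ)
    · exact fun x y => (hrel x y).mp (hgp x y)
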